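/- arXiv:2103.11977 — 6 statements merged into one kernel-verified Lean document; each statement's English description precedes it below -/
import Mathlib

section
/- Let F be a field, G a group, n ≥ 2, and suppose UT_n^(-) carries a G-grading in which every diagonal matrix unit e_{11}, …, e_{nn} is semihomogeneous. Then for all 1 ≤ i < j ≤ n the matrix unit e_{ij} is homogeneous in the grading. -/
/-! Some homogeneous component `y` of the upper triangular matrix `e_{ij}` has `y i j ≠ 0`.
Bracketing `y` with the semihomogeneous `e_{ii} - c I` and then `e_{jj} - c' I` kills the central
parts and leaves the homogeneous element `-(y i j) • e_{ij}`. -/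

open Matrix

lemma Submodule.exists_apply_ne_zero_of_mem_iSup {ι R M N : Type*} [Semiring R]
    [AddCommMonoid M] [Module R M] [AddCommMonoid N] [Module R N]
    (U : ι → Submodule R M) (φ : M →ₗ[R] N) {x : M} (hx : x ∈ ⨆ i, U i)
    (hφx : φ x ≠ 0) :
    ∃ i, ∃ y ∈ U i, φ y ≠ 0 := by
  by_contra! h
  have hker : ⨆ i, U i ≤ LinearMap.ker φ := iSup_le fun i y hy => h i y hy
  exact hφx (hker hx)

lemma lie_sub_smul_one {R A : Type*} [CommRing R] [Ring A] [Algebra R A] (x y : A) (c : R) :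
    ⁅x, y - c • (1 : A)⁆ = ⁅x, y⁆ := by
  simp only [Ring.lie_def, mul_sub, sub_mul, mul_smul_comm, smul_mul_assoc, mul_one, one_mul]
  abel

lemma Matrix.lie_lie_single_single_of_ne {R n : Type*} [Ring R] [Fintype n] [DecidableEq n]
    (x : Matrix n n R) {i j : n} (hij : i ≠ j) :
    ⁅⁅x, single i i (1 : R)⁆, single j j 1⁆ =
      -(single i j (x i j) + single j i (x j i)) := by
  have hij0 : single i i (1 : R) * single j j 1 = 0 := single_mul_single_of_ne _ _ _ _ hij _
  have hji0 : single j j (1 : R) * single i i 1 = 0 := single_mul_single_of_ne _ _ _ _ hij.symm _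
  simp only [Ring.lie_def, sub_mul, mul_sub, ← Matrix.mul_assoc, single_mul_mul_single, one_mul,
    mul_one]
  rw [Matrix.mul_assoc x, hij0, hji0, Matrix.mul_zero, Matrix.zero_mul]
  abel

lemma Matrix.lie_lie_single_sub_smul_one_of_blockTriangular {R n : Type*} [CommRing R]
    [Fintype n] [LinearOrder n] {x : Matrix n n R} (hx : x.BlockTriangular id)
    {i j : n} (hij : i < j) (c c' : R) :
    ⁅⁅x, single i i 1 - c • (1 : Matrix n n R)⁆, single j j 1 - c' • (1 : Matrix n n R)⁆
      = -(x i j) • single i j 1 := by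
  rw [lie_sub_smul_one, lie_sub_smul_one, lie_lie_single_single_of_ne x hij.ne, hx hij,
    single_zero, add_zero, neg_smul, smul_single, smul_eq_mul, mul_one]

theorem stmt9_general (F G : Type*) [Field F] [Group G] (n : ℕ)
    (U : G → Submodule F (Matrix (Fin n) (Fin n) F))
    (hUT : ∀ g, ∀ x ∈ U g, ∀ i j : Fin n, j < i → x i j = 0)
    (hcover : ∀ x : Matrix (Fin n) (Fin n) F,
      (∀ i j : Fin n, j < i → x i j = 0) → x ∈ ⨆ g, U g)
    (hbr : ∀ g h : G, ∀ x ∈ U g, ∀ y ∈ U h, ⁅x, y⁆ ∈ U (g * h))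
    (hsemi : ∀ i : Fin n, ∃ g : G, ∃ c : F,
      Matrix.single i i 1 - c • (1 : Matrix (Fin n) (Fin n) F) ∈ U g) :
    ∀ i j : Fin n, i < j → ∃ g : G, Matrix.single i j 1 ∈ U g := by
  intro i j hij
  obtain ⟨gi, ci, hi⟩ := hsemi i
  obtain ⟨gj, cj, hj⟩ := hsemi j
  obtain ⟨g, y, hy, hyij⟩ : ∃ g, ∃ y ∈ U g, y i j ≠ 0 :=
    Submodule.exists_apply_ne_zero_of_mem_iSup U (entryLinearMap F F i j)
      (hcover _ (blockTriangular_single (b := id) hij.le 1)) (by simp)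
  have hbracket := hbr _ _ _ (hbr _ _ _ hy _ hi) _ hj
  rw [lie_lie_single_sub_smul_one_of_blockTriangular (hUT g y hy) hij] at hbracket
  have hunit := (U (g * gi * gj)).smul_mem (-(y i j))⁻¹ hbracket
  rw [smul_smul, inv_mul_cancel₀ (neg_ne_zero.mpr hyij), one_smul] at hunit
  exact ⟨_, hunit⟩

/-- if `UT_n^(-)` carries a `G`-grading in which every diagonal matrix
unit `e_{ii}` is semihomogeneous (homogeneous modulo the center `F·I`), then every
matrix unit `e_{ij}` with `i < j` is homogeneous. -/
theorem stmt9 (F G : Type*) [Field F] [Group G] (n : ℕ) (hn : 2 ≤ n)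
    (U : G → Submodule F (Matrix (Fin n) (Fin n) F))
    (hUT : ∀ g, ∀ x ∈ U g, ∀ i j : Fin n, j < i → x i j = 0)
    (hcover : ∀ x : Matrix (Fin n) (Fin n) F,
      (∀ i j : Fin n, j < i → x i j = 0) → x ∈ ⨆ g, U g)
    (hind : iSupIndep U)
    (hbr : ∀ g h : G, ∀ x ∈ U g, ∀ y ∈ U h, ⁅x, y⁆ ∈ U (g * h))
    (hsemi : ∀ i : Fin n, ∃ g : G, ∃ c : F,
      Matrix.single i i 1 - c • (1 : Matrix (Fin n) (Fin n) F) ∈ U g) :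
    ∀ i j : Fin n, i < j → ∃ g : G, Matrix.single i j 1 ∈ U g :=
  stmt9_general F G n U hUT hcover hbr hsemi
end

section
/- Let F be a field, G a group, n ≥ 2, and suppose UT_n^(-) carries a G-grading in which each matrix unit e_{i,i+1} (1 ≤ i ≤ n−1) is homogeneous of degree g_i and each e_{ii} is homogeneous. Then deg e_{ii} = 1 for every i, and the elements g_1, …, g_{n−1} commute pairwise. -/
/-!
Both claims come from comparing degrees of the two sides of bracket identities between matrix
units. Since `[e_ii, e_{i,i+1}] = e_{i,i+1}` (or `[e_{i-1,i}, e_ii] = e_{i-1,i}` for the last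
index), `deg e_ii · g_i = g_i`, so `deg e_ii = 1`. Inductively `e_{i,i+k}` then has degree
`g_i ⋯ g_{i+k-1}`, and `[e_{i+k,i+k+1}, e_{i,i+k}] = -e_{i,i+k+1}` shows that `g_{i+k}` commutes
with `g_i ⋯ g_{i+k-1}`. As it also commutes with `g_{i+1} ⋯ g_{i+k-1}`, it commutes with `g_i`.
-/

open Matrix

theorem iSupIndep.eq_of_mem_of_mem {ι R M : Type*} [Semiring R] [AddCommMonoid M] [Module R M]
    {U : ι → Submodule R M} (hU : iSupIndep U) {a b : ι} {x : M}
    (ha : x ∈ U a) (hb : x ∈ U b) (hx : x ≠ 0) : a = b := by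
  by_contra hab
  exact hx (Submodule.disjoint_def.mp (hU.pairwiseDisjoint hab) x ha hb)

theorem eq_of_single_one_mem {ι R G : Type*} [DecidableEq ι] [Semiring R] [Nontrivial R]
    {U : G → Submodule R (Matrix ι ι R)} {a b : ι} {x y : G} (hind : iSupIndep U)
    (hx : single a b (1 : R) ∈ U x) (hy : single a b (1 : R) ∈ U y) : x = y :=
  hind.eq_of_mem_of_mem hx hy fun h ↦ one_ne_zero (α := R) (by simpa using congr_fun₂ h a b)

namespace Matrix

variable {ι R : Type*} [DecidableEq ι] [Fintype ι] [Ring R]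

theorem lie_single_single_of_ne {a c : ι} (b : ι) (hac : a ≠ c) (x y : R) :
    ⁅single a b x, single b c y⁆ = single a c (x * y) := by
  rw [Ring.lie_def, single_mul_single_same, single_mul_single_of_ne _ _ _ _ hac.symm, sub_zero]

theorem lie_single_single_of_ne' {a c : ι} (b : ι) (hac : a ≠ c) (x y : R) :
    ⁅single b c y, single a b x⁆ = -single a c (x * y) := by
  rw [Ring.lie_def, single_mul_single_of_ne _ _ _ _ hac.symm, single_mul_single_same, zero_sub]

end Matrix

section Grading

variable {ι R G : Type*} [DecidableEq ι] [Fintype ι] [Ring R] [Group G]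
  {U : G → Submodule R (Matrix ι ι R)} {a b c : ι} {x y : G}

theorem single_one_mem_mul
    (hbr : ∀ g h : G, ∀ x ∈ U g, ∀ y ∈ U h, ⁅x, y⁆ ∈ U (g * h)) (hac : a ≠ c)
    (hx : single a b (1 : R) ∈ U x) (hy : single b c (1 : R) ∈ U y) :
    single a c (1 : R) ∈ U (x * y) := by
  simpa [lie_single_single_of_ne b hac] using hbr x y _ hx _ hy

theorem single_one_mem_mul'
    (hbr : ∀ g h : G, ∀ x ∈ U g, ∀ y ∈ U h, ⁅x, y⁆ ∈ U (g * h)) (hac : a ≠ c)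
    (hx : single a b (1 : R) ∈ U x) (hy : single b c (1 : R) ∈ U y) :
    single a c (1 : R) ∈ U (y * x) := by
  simpa [lie_single_single_of_ne' b hac] using hbr y x _ hy _ hx

theorem eq_one_of_single_diag_mem_left [Nontrivial R] (hind : iSupIndep U)
    (hbr : ∀ g h : G, ∀ x ∈ U g, ∀ y ∈ U h, ⁅x, y⁆ ∈ U (g * h)) (hab : a ≠ b)
    (hx : single a b (1 : R) ∈ U x) (hy : single a a (1 : R) ∈ U y) : y = 1 :=
  mul_eq_right.mp (eq_of_single_one_mem hind (single_one_mem_mul hbr hab hy hx) hx)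

theorem eq_one_of_single_diag_mem_right [Nontrivial R] (hind : iSupIndep U)
    (hbr : ∀ g h : G, ∀ x ∈ U g, ∀ y ∈ U h, ⁅x, y⁆ ∈ U (g * h)) (hab : a ≠ b)
    (hx : single a b (1 : R) ∈ U x) (hy : single b b (1 : R) ∈ U y) : y = 1 :=
  mul_eq_left.mp (eq_of_single_one_mem hind (single_one_mem_mul hbr hab hx hy) hx)

end Grading

def consecutiveProd {G : Type*} [Monoid G] (g : ℕ → G) (i : ℕ) : ℕ → G
  | 0 => 1
  | k + 1 => consecutiveProd g i k * g (i + k)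

theorem consecutiveProd_succ' {G : Type*} [Monoid G] (g : ℕ → G) (i k : ℕ) :
    consecutiveProd g i (k + 1) = g i * consecutiveProd g (i + 1) k := by
  induction k with
  | zero => simp [consecutiveProd]
  | succ k ih =>
    rw [consecutiveProd, ih, consecutiveProd, mul_assoc, Nat.add_right_comm i 1 k, add_assoc]

section Superdiagonal

variable {R G : Type*} [Ring R] [Group G] {n : ℕ}
  {U : G → Submodule R (Matrix (Fin n) (Fin n) R)} {g : ℕ → G}

theorem single_one_mem_consecutiveProd
    (hbr : ∀ g h : G, ∀ x ∈ U g, ∀ y ∈ U h, ⁅x, y⁆ ∈ U (g * h))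
    (hdiag : ∀ i : Fin n, single i i (1 : R) ∈ U 1)
    (hg : ∀ (i : ℕ) (h : i + 1 < n),
      single (⟨i, Nat.lt_of_succ_lt h⟩ : Fin n) (⟨i + 1, h⟩ : Fin n) (1 : R) ∈ U (g i))
    (i k : ℕ) (h : i + k < n) :
    single (⟨i, by omega⟩ : Fin n) (⟨i + k, h⟩ : Fin n) (1 : R) ∈ U (consecutiveProd g i k) := by
  induction k with
  | zero => exact hdiag _
  | succ k ih =>
    exact single_one_mem_mul hbr (by simp [Fin.ext_iff]) (ih (by omega)) (hg (i + k) h)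

theorem commute_consecutiveProd [Nontrivial R] (hind : iSupIndep U)
    (hbr : ∀ g h : G, ∀ x ∈ U g, ∀ y ∈ U h, ⁅x, y⁆ ∈ U (g * h))
    (hdiag : ∀ i : Fin n, single i i (1 : R) ∈ U 1)
    (hg : ∀ (i : ℕ) (h : i + 1 < n),
      single (⟨i, Nat.lt_of_succ_lt h⟩ : Fin n) (⟨i + 1, h⟩ : Fin n) (1 : R) ∈ U (g i))
    (i k : ℕ) (h : i + k + 1 < n) :
    Commute (g (i + k)) (consecutiveProd g i k) := by
  have hpath := single_one_mem_consecutiveProd hbr hdiag hg i k (by omega)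
  have hdeg := eq_of_single_one_mem hind
    (single_one_mem_mul' hbr (by simp [Fin.ext_iff]; omega) hpath (hg _ h))
    (single_one_mem_consecutiveProd hbr hdiag hg i (k + 1) h)
  rwa [consecutiveProd] at hdeg

theorem commute_of_lt [Nontrivial R] (hind : iSupIndep U)
    (hbr : ∀ g h : G, ∀ x ∈ U g, ∀ y ∈ U h, ⁅x, y⁆ ∈ U (g * h))
    (hdiag : ∀ i : Fin n, single i i (1 : R) ∈ U 1)
    (hg : ∀ (i : ℕ) (h : i + 1 < n),
      single (⟨i, Nat.lt_of_succ_lt h⟩ : Fin n) (⟨i + 1, h⟩ : Fin n) (1 : R) ∈ U (g i))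
    {i j : ℕ} (hij : i < j) (hj : j + 1 < n) : Commute (g i) (g j) := by
  obtain ⟨k, rfl⟩ : ∃ k, j = i + k + 1 := ⟨j - i - 1, by omega⟩
  have hfull := commute_consecutiveProd hind hbr hdiag hg i (k + 1) (by omega)
  have htail := commute_consecutiveProd hind hbr hdiag hg (i + 1) k (by omega)
  rw [consecutiveProd_succ', ← add_assoc] at hfull
  rw [Nat.add_right_comm] at htail
  simpa using (hfull.mul_right htail.inv_right).symm

theorem diag_degree_eq_one [Nontrivial R] (hn : 2 ≤ n) (hind : iSupIndep U)
    (hbr : ∀ g h : G, ∀ x ∈ U g, ∀ y ∈ U h, ⁅x, y⁆ ∈ U (g * h))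
    {d : Fin n → G} (hd : ∀ i : Fin n, single i i (1 : R) ∈ U (d i))
    (hg : ∀ (i : ℕ) (h : i + 1 < n),
      single (⟨i, Nat.lt_of_succ_lt h⟩ : Fin n) (⟨i + 1, h⟩ : Fin n) (1 : R) ∈ U (g i))
    (i : Fin n) : d i = 1 := by
  by_cases hi : (i : ℕ) + 1 < n
  · exact eq_one_of_single_diag_mem_left hind hbr (by simp [Fin.ext_iff]) (hg i hi) (hd i)
  · have hlast : (⟨n - 2 + 1, by omega⟩ : Fin n) = i := by ext; simp; omega
    have hprev := hg (n - 2) (by omega)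
    rw [hlast] at hprev
    exact eq_one_of_single_diag_mem_right hind hbr (by simp [Fin.ext_iff]; omega) hprev (hd i)

end Superdiagonal

/-- if `UT_n^(-)` carries a `G`-grading in which each `e_{i,i+1}` is
homogeneous of degree `g_i` and each `e_{ii}` is homogeneous, then `deg e_{ii} = 1`
for every `i` and the elements `g_1, …, g_{n−1}` commute pairwise. -/
theorem stmt10 (F G : Type*) [Field F] [Group G] (n : ℕ) (hn : 2 ≤ n)
    (U : G → Submodule F (Matrix (Fin n) (Fin n) F))
    (hind : iSupIndep U)
    (hbr : ∀ g h : G, ∀ x ∈ U g, ∀ y ∈ U h, ⁅x, y⁆ ∈ U (g * h))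
    (d : Fin n → G)
    (hd : ∀ i : Fin n, Matrix.single i i 1 ∈ U (d i))
    (g : ℕ → G)
    (hg : ∀ (i : ℕ) (h : i + 1 < n),
      Matrix.single (⟨i, by omega⟩ : Fin n) (⟨i + 1, h⟩ : Fin n) 1 ∈ U (g i)) :
    (∀ i : Fin n, d i = 1)
      ∧ ∀ i j : ℕ, i + 1 < n → j + 1 < n → g i * g j = g j * g i := by
  have hdiag : ∀ i : Fin n, Matrix.single i i (1 : F) ∈ U 1 := fun i ↦
    diag_degree_eq_one hn hind hbr hd hg i ▸ hd i
  refine ⟨diag_degree_eq_one hn hind hbr hd hg, fun i j hi hj ↦ ?_⟩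
  rcases lt_trichotomy i j with hij | rfl | hji
  · exact (commute_of_lt hind hbr hdiag hg hij hj).eq
  · rfl
  · exact (commute_of_lt hind hbr hdiag hg hji hi).eq.symm
end

section
/- Let F be a field, n ≥ 2, and let I₁ = {x ∈ UT_n : x_{ij} = 0 whenever i ≠ 1} and J the strictly upper triangular matrices. Then I₁ ∩ J is a Lie ideal of UT_n^(-), and for any r ∈ J, the image of the map (ad(e_{11}+r))^n : UT_n^(-) → UT_n^(-) equals I₁ ∩ J, where ad(x)(a) = [x,a]. -/
/-!
Write `E = e₁₁` and `D = ad(E + r)`. On `I₁ ∩ J` the bracket is right multiplication,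
`D x = x (1 - r)`, and `1 - r` has the upper triangular inverse `∑_{k<n} r^k` because `r^n = 0`;
so `D^n` maps `I₁ ∩ J` onto itself. Conversely `ad E` sends every upper triangular matrix into
`I₁ ∩ J`, while `ad r` pushes the support up by one superdiagonal, so `D^k a` is an element of
`I₁ ∩ J` plus a matrix vanishing below the `k`-th superdiagonal, which is zero once `k = n`.
-/

namespace Matrix

variable {R : Type*} {n : ℕ}

section Superdiagonals

/-- `M` vanishes below its `k`-th superdiagonal: for `k = 0` this says that `M` is upper
triangular, for `k = 1` that it is strictly upper triangular. -/
def VanishesBelowSuperdiag [Zero R] (k : ℕ) (M : Matrix (Fin n) (Fin n) R) : Prop :=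
  ∀ i j : Fin n, (j : ℕ) < i + k → M i j = 0

variable {k l : ℕ} {A B : Matrix (Fin n) (Fin n) R}

theorem vanishesBelowSuperdiag_zero_iff [Zero R] :
    VanishesBelowSuperdiag 0 A ↔ A.IsUpperTriangular :=
  ⟨fun h i j (hij : j < i) => h i j (by omega), fun h i j hij => h (show j < i by omega)⟩

theorem VanishesBelowSuperdiag.isUpperTriangular [Zero R] (h : VanishesBelowSuperdiag k A) :
    A.IsUpperTriangular :=
  fun i j (hij : j < i) => h i j (by omega)

theorem VanishesBelowSuperdiag.eq_zero [Zero R] (hk : n ≤ k) (h : VanishesBelowSuperdiag k A) :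
    A = 0 :=
  ext fun i j => h i j (by omega)

theorem VanishesBelowSuperdiag.sub [AddGroup R] (hA : VanishesBelowSuperdiag k A)
    (hB : VanishesBelowSuperdiag k B) : VanishesBelowSuperdiag k (A - B) := fun i j hij => by
  rw [sub_apply, hA i j hij, hB i j hij, sub_zero]

theorem VanishesBelowSuperdiag.mul [NonUnitalNonAssocSemiring R]
    (hA : VanishesBelowSuperdiag k A) (hB : VanishesBelowSuperdiag l B) :
    VanishesBelowSuperdiag (k + l) (A * B) := fun i j hij => by
  rw [mul_apply]
  refine Finset.sum_eq_zero fun m _ => ?_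
  by_cases hm : (m : ℕ) < i + k
  · rw [hA i m hm, zero_mul]
  · rw [hB m j (by omega), mul_zero]

theorem VanishesBelowSuperdiag.pow [Semiring R] (hA : VanishesBelowSuperdiag k A) (m : ℕ) :
    VanishesBelowSuperdiag (k * m) (A ^ m) := by
  induction m with
  | zero => exact vanishesBelowSuperdiag_zero_iff.mpr blockTriangular_one
  | succ m ih => rw [pow_succ, Nat.mul_succ]; exact ih.mul hA

end Superdiagonals

section FirstRow

variable [Ring R]

local notation "e₁₁" => single (0 : Fin _) (0 : Fin _) 1

/-- The paper's `I₁ ∩ J`. -/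
def firstRowStrict : Submodule R (Matrix (Fin n) (Fin n) R) where
  carrier := {x | ∀ i j : Fin n, ¬((i : ℕ) = 0 ∧ i < j) → x i j = 0}
  zero_mem' _ _ _ := rfl
  add_mem' hx hy i j hij := by rw [add_apply, hx i j hij, hy i j hij, add_zero]
  smul_mem' c x hx i j hij := by rw [smul_apply, hx i j hij, smul_zero]

variable {a x : Matrix (Fin n) (Fin n) R}

theorem IsUpperTriangular.of_mem_firstRowStrict (hx : x ∈ firstRowStrict) :
    x.IsUpperTriangular :=
  fun i j (hij : j < i) => hx i j fun h => by omega

theorem IsUpperTriangular.mul_eq_smul_of_mem_firstRowStrict [NeZero n]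
    (ha : a.IsUpperTriangular) (hx : x ∈ firstRowStrict) : a * x = a 0 0 • x := by
  ext i j
  rw [mul_apply, Finset.sum_eq_single 0 (fun m _ hm => ?_) (by simp), smul_apply, smul_eq_mul]
  · rcases eq_or_ne i 0 with rfl | hi
    · rfl
    · rw [ha (Fin.pos_iff_ne_zero.mpr hi), hx i j fun h => hi (Fin.val_eq_zero_iff.mp h.1),
        zero_mul, mul_zero]
  · rw [hx m j fun h => hm (Fin.val_eq_zero_iff.mp h.1), mul_zero]

theorem mul_mem_firstRowStrict (hx : x ∈ firstRowStrict) (ha : a.IsUpperTriangular) :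
    x * a ∈ firstRowStrict := fun i j hij => by
  rw [mul_apply]
  refine Finset.sum_eq_zero fun m _ => ?_
  by_cases hm : (i : ℕ) = 0 ∧ i < m
  · rw [ha (show j < m by omega), mul_zero]
  · rw [hx i m hm, zero_mul]

theorem lie_mem_firstRowStrict [NeZero n] (ha : a.IsUpperTriangular) (hx : x ∈ firstRowStrict) :
    ⁅a, x⁆ ∈ firstRowStrict := by
  rw [Ring.lie_def, ha.mul_eq_smul_of_mem_firstRowStrict hx]
  exact sub_mem (Submodule.smul_mem _ _ hx) (mul_mem_firstRowStrict hx ha)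

theorem mul_single_zero_of_mem_firstRowStrict [NeZero n] (hx : x ∈ firstRowStrict) :
    x * e₁₁ = 0 := by
  ext i j
  rcases eq_or_ne j 0 with rfl | hj
  · rw [mul_single_apply_same, hx i 0 (by simp), zero_mul, zero_apply]
  · rw [mul_single_apply_of_ne (hbj := hj), zero_apply]

theorem lie_single_mem_firstRowStrict [NeZero n] (ha : a.IsUpperTriangular) :
    ⁅(e₁₁ : Matrix (Fin n) (Fin n) R), a⁆ ∈ firstRowStrict := fun i j hij => by
  rw [Ring.lie_def, sub_apply]
  rcases eq_or_ne i 0 with rfl | hi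
  · obtain rfl : j = 0 := by simpa [Fin.pos_iff_ne_zero] using hij
    simp
  · rw [single_mul_apply_of_ne (h := hi)]
    rcases eq_or_ne j 0 with rfl | hj
    · rw [mul_single_apply_same, ha (Fin.pos_iff_ne_zero.mpr hi), zero_mul, sub_zero]
    · rw [mul_single_apply_of_ne (hbj := hj), sub_zero]

variable {r : Matrix (Fin n) (Fin n) R}

theorem lie_single_add_of_mem_firstRowStrict [NeZero n] (hr : VanishesBelowSuperdiag 1 r)
    (hx : x ∈ firstRowStrict) : ⁅e₁₁ + r, x⁆ = x * (1 - r) := by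
  have hE : (e₁₁ + r).IsUpperTriangular :=
    (blockTriangular_single le_rfl 1).add hr.isUpperTriangular
  rw [Ring.lie_def, hE.mul_eq_smul_of_mem_firstRowStrict hx, mul_add,
    mul_single_zero_of_mem_firstRowStrict hx, add_apply, single_apply_same, hr 0 0 (by simp),
    add_zero, one_smul, zero_add, mul_sub, mul_one]

theorem iterate_lie_single_add_of_mem_firstRowStrict [NeZero n] (hr : VanishesBelowSuperdiag 1 r)
    (hx : x ∈ firstRowStrict) (k : ℕ) :
    (fun a => ⁅e₁₁ + r, a⁆)^[k] x = x * (1 - r) ^ k := by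
  induction k with
  | zero => simp
  | succ k ih =>
    have hmem : x * (1 - r) ^ k ∈ firstRowStrict :=
      mul_mem_firstRowStrict hx ((blockTriangular_one.sub hr.isUpperTriangular).pow k)
    rw [Function.iterate_succ_apply', ih, lie_single_add_of_mem_firstRowStrict hr hmem, pow_succ,
      mul_assoc]

theorem exists_iterate_lie_single_add_eq [NeZero n] (hr : VanishesBelowSuperdiag 1 r)
    {y : Matrix (Fin n) (Fin n) R} (hy : y ∈ firstRowStrict) :
    ∃ x, x.IsUpperTriangular ∧ (fun a => ⁅e₁₁ + r, a⁆)^[n] x = y := by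
  set u := ∑ k ∈ Finset.range n, r ^ k
  have hu : u * (1 - r) = 1 := by
    rw [geom_sum_mul_neg, (hr.pow n).eq_zero (by omega), sub_zero]
  have hu_upper : u.IsUpperTriangular :=
    sum_mem (S := blockTriangularSubsemiring R id) fun k _ => hr.isUpperTriangular.pow k
  have hx : y * u ^ n ∈ firstRowStrict := mul_mem_firstRowStrict hy (hu_upper.pow n)
  refine ⟨y * u ^ n, .of_mem_firstRowStrict hx, ?_⟩
  rw [iterate_lie_single_add_of_mem_firstRowStrict hr hx, mul_assoc, pow_mul_pow_eq_one n hu,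
    mul_one]

theorem exists_iterate_lie_single_add_eq_add [NeZero n] (hr : VanishesBelowSuperdiag 1 r)
    (ha : a.IsUpperTriangular) (k : ℕ) :
    ∃ s ∈ firstRowStrict, ∃ t, VanishesBelowSuperdiag k t ∧
      (fun b => ⁅e₁₁ + r, b⁆)^[k] a = s + t := by
  induction k with
  | zero => exact ⟨0, zero_mem _, a, vanishesBelowSuperdiag_zero_iff.mpr ha, by simp⟩
  | succ k ih =>
    obtain ⟨s, hs, t, ht, h⟩ := ih
    refine ⟨s * (1 - r) + ⁅e₁₁, t⁆,
      add_mem (mul_mem_firstRowStrict hs (blockTriangular_one.sub hr.isUpperTriangular))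
        (lie_single_mem_firstRowStrict ht.isUpperTriangular), ⁅r, t⁆, ?_, ?_⟩
    · rw [Ring.lie_def, add_comm]
      exact (hr.mul ht).sub (add_comm k 1 ▸ ht.mul hr)
    · rw [Function.iterate_succ_apply', h, ← lie_single_add_of_mem_firstRowStrict hr hs]
      simp only [Ring.lie_def, add_mul, mul_add]
      abel

theorem iterate_lie_single_add_mem_firstRowStrict [NeZero n] (hr : VanishesBelowSuperdiag 1 r)
    (ha : a.IsUpperTriangular) :
    (fun b => ⁅e₁₁ + r, b⁆)^[n] a ∈ firstRowStrict := by
  obtain ⟨s, hs, t, ht, h⟩ := exists_iterate_lie_single_add_eq_add hr ha n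
  rwa [h, ht.eq_zero le_rfl, add_zero]

end FirstRow

end Matrix

/-- the set `I₁ ∩ J` of matrices supported on the first row strictly
above the diagonal is a Lie ideal of `UT_n^(-)`, and for any strictly upper
triangular `r`, the image of `(ad(e_{11}+r))^n` on `UT_n^(-)` equals `I₁ ∩ J`. -/
theorem stmt15 (F : Type*) [Field F] (n : ℕ) (hn : 2 ≤ n) :
    let S : Set (Matrix (Fin n) (Fin n) F) :=
      {x | ∀ i j : Fin n, ¬((i : ℕ) = 0 ∧ i < j) → x i j = 0}
    ((0 : Matrix (Fin n) (Fin n) F) ∈ S)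
      ∧ (∀ x ∈ S, ∀ y ∈ S, x + y ∈ S)
      ∧ (∀ c : F, ∀ x ∈ S, c • x ∈ S)
      ∧ (∀ a : Matrix (Fin n) (Fin n) F, (∀ i j : Fin n, j < i → a i j = 0) →
          ∀ x ∈ S, ⁅a, x⁆ ∈ S)
      ∧ ∀ r : Matrix (Fin n) (Fin n) F, (∀ i j : Fin n, j ≤ i → r i j = 0) →
          ∀ y : Matrix (Fin n) (Fin n) F,
            (y ∈ S ↔ ∃ x : Matrix (Fin n) (Fin n) F,
              (∀ i j : Fin n, j < i → x i j = 0) ∧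
              (fun a => ⁅Matrix.single (⟨0, by omega⟩ : Fin n)
                  (⟨0, by omega⟩ : Fin n) (1 : F) + r, a⁆)^[n] x = y) := by
  intro S
  have : NeZero n := ⟨by omega⟩
  refine ⟨Matrix.firstRowStrict.zero_mem, fun x hx y hy => Matrix.firstRowStrict.add_mem hx hy,
    fun c x hx => Matrix.firstRowStrict.smul_mem c hx,
    fun a ha x hx => Matrix.lie_mem_firstRowStrict ha hx, ?_⟩
  intro r hr y
  have hr' : Matrix.VanishesBelowSuperdiag 1 r := fun i j hij => hr i j (by omega)
  constructor
  · exact Matrix.exists_iterate_lie_single_add_eq hr'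
  · rintro ⟨x, hx, rfl⟩
    exact Matrix.iterate_lie_single_add_mem_firstRowStrict hr' hx
end

section
/- Let L₁ and L₂ be G-graded Lie algebras over a field F, and let ψ : L₁ → L₂ be an isomorphism of (ungraded) Lie algebras such that the induced map L₁/z(L₁) → L₂/z(L₂) and the restriction z(L₁) → z(L₂) are both isomorphisms of G-graded vector spaces (where the centers and quotients carry the induced gradings, assumed well-defined). Then L₁ and L₂ are isomorphic as G-graded Lie algebras. -/
/-!
Let `Φ` be the degree-preserving part of `ψ`: on `x` of degree `g`, `Φ x` is the degree-`g`
component of `ψ x`. Because `ψ` is graded modulo the centre, `Φ - ψ` takes values in `z(L₂)`;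
because `ψ` is graded on the (homogeneous) centre, `Φ = ψ` on `z(L₁)`. A central perturbation does
not change brackets, so `⁅Φ x, Φ y⁆ = ψ ⁅x, y⁆`, and for homogeneous `x, y` of degrees `g, h` both
sides' degree-`gh` components give `Φ ⁅x, y⁆ = ⁅Φ x, Φ y⁆`. Finally `Φ` is bijective since `ψ` is
and the perturbation is central and vanishes on the centre.
-/

open DirectSum

namespace LinearMap

variable {ι R M N : Type*} [DecidableEq ι] [Ring R] [AddCommGroup M] [Module R M]
  [AddCommGroup N] [Module R N] (𝒜 : ι → Submodule R M) (ℬ : ι → Submodule R N)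
  [Decomposition 𝒜] [Decomposition ℬ]

def gradedPart (f : M →ₗ[R] N) : M →ₗ[R] N :=
  toModule R ι N (fun i => (ℬ i).subtype ∘ₗ component R ι (ℬ ·) i ∘ₗ
      (decomposeLinearEquiv ℬ).toLinearMap ∘ₗ f ∘ₗ (𝒜 i).subtype) ∘ₗ
    (decomposeLinearEquiv 𝒜).toLinearMap

variable {𝒜 ℬ} (f : M →ₗ[R] N)

theorem gradedPart_apply_of_mem {i : ι} {x : M} (hx : x ∈ 𝒜 i) :
    gradedPart 𝒜 ℬ f x = decompose ℬ (f x) i := by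
  lift x to 𝒜 i using hx
  rw [gradedPart, comp_apply, LinearEquiv.coe_coe, decomposeLinearEquiv_apply_coe, toModule_lof]
  rfl

theorem gradedPart_mem {i : ι} {x : M} (hx : x ∈ 𝒜 i) : gradedPart 𝒜 ℬ f x ∈ ℬ i := by
  rw [gradedPart_apply_of_mem f hx]
  exact Submodule.coe_mem _

theorem gradedPart_sub_mem {P : Type*} [SetLike P N] [AddSubgroupClass P N] {p : P}
    (hp : SetLike.IsHomogeneous ℬ p) (hf : ∀ i, ∀ x ∈ 𝒜 i, ∃ z ∈ p, f x + z ∈ ℬ i) (x : M) :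
    gradedPart 𝒜 ℬ f x - f x ∈ p := by
  induction x using Decomposition.inductionOn 𝒜 with
  | zero => simp
  | @homogeneous i x =>
    obtain ⟨z, hz, hfz⟩ := hf i x x.2
    have hproj : (decompose ℬ (f x) i : N) = f x + z - decompose ℬ z i := by
      rw [eq_sub_iff_add_eq, ← Submodule.coe_add, ← DirectSum.add_apply, ← decompose_add,
        decompose_of_mem_same ℬ hfz]
    rw [gradedPart_apply_of_mem f x.2, hproj, sub_right_comm, add_sub_cancel_left]
    exact sub_mem hz (hp i hz)
  | add x y hx hy =>
    rw [map_add, map_add, add_sub_add_comm]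
    exact add_mem hx hy

theorem gradedPart_apply_eq_of_mem {P : Type*} [SetLike P M] [AddSubgroupClass P M] {p : P}
    (hp : SetLike.IsHomogeneous 𝒜 p) (hf : ∀ i, ∀ x ∈ p, x ∈ 𝒜 i → f x ∈ ℬ i) {x : M}
    (hx : x ∈ p) : gradedPart 𝒜 ℬ f x = f x := by
  classical
  rw [← sum_support_decompose 𝒜 x, map_sum, map_sum]
  refine Finset.sum_congr rfl fun i _ => ?_
  have hxi := (decompose 𝒜 x i).2
  rw [gradedPart_apply_of_mem f hxi, decompose_of_mem_same ℬ (hf i _ (hp i hx) hxi)]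

end LinearMap

section Lie

variable {R L₁ L₂ : Type*} [CommRing R] [LieRing L₁] [LieAlgebra R L₁] [LieRing L₂]
  [LieAlgebra R L₂]

open LieAlgebra

theorem LieEquiv.map_mem_center_iff (e : L₁ ≃ₗ⁅R⁆ L₂) {x : L₁} :
    e x ∈ center R L₂ ↔ x ∈ center R L₁ := by
  simp only [LieModule.mem_maxTrivSubmodule]
  refine ⟨fun h y => e.toLinearEquiv.injective ?_, fun h y => ?_⟩
  · rw [map_zero]
    exact (e.map_lie y x).trans (h (e y))
  · rw [← e.apply_symm_apply y, ← e.map_lie, h, map_zero]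

theorem LieHom.lie_eq_of_sub_mem_center (ψ : L₁ →ₗ⁅R⁆ L₂) {Φ : L₁ → L₂}
    (hΦ : ∀ x, Φ x - ψ x ∈ center R L₂) (x y : L₁) : ⁅Φ x, Φ y⁆ = ψ ⁅x, y⁆ := by
  have hz : ∀ x, ∀ c : L₂, ⁅Φ x - ψ x, c⁆ = 0 := fun x c => by
    rw [← lie_skew, (LieModule.mem_maxTrivSubmodule R L₂ L₂ _).mp (hΦ x) c, neg_zero]
  rw [← sub_add_cancel (Φ x) (ψ x), ← sub_add_cancel (Φ y) (ψ y), add_lie, hz, zero_add,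
    lie_add, (LieModule.mem_maxTrivSubmodule R L₂ L₂ _).mp (hΦ y), zero_add, ψ.map_lie]

theorem LieEquiv.bijective_of_sub_mem_center (ψ : L₁ ≃ₗ⁅R⁆ L₂) (Φ : L₁ →ₗ[R] L₂)
    (hΦ : ∀ x, Φ x - ψ x ∈ center R L₂) (hΦc : ∀ x ∈ center R L₁, Φ x = ψ x) :
    Function.Bijective Φ := by
  refine ⟨(injective_iff_map_eq_zero Φ).mpr fun x hx => ?_, fun y => ?_⟩
  · have hxc : x ∈ center R L₁ := by
      rw [← ψ.map_mem_center_iff, ← neg_mem_iff, ← zero_sub, ← hx]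
      exact hΦ x
    simpa [hx] using (hΦc x hxc).symm
  · have hc : ψ.symm (Φ (ψ.symm y) - y) ∈ center R L₁ := by
      rw [← ψ.map_mem_center_iff, ψ.apply_symm_apply]
      simpa using hΦ (ψ.symm y)
    refine ⟨ψ.symm y - ψ.symm (Φ (ψ.symm y) - y), ?_⟩
    rw [map_sub, hΦc _ hc, ψ.apply_symm_apply, sub_sub_cancel]

end Lie

theorem LinearMap.map_lie_of_homogeneous {ι R L₁ L₂ : Type*} [DecidableEq ι] [CommRing R]
    [LieRing L₁] [LieAlgebra R L₁] [LieRing L₂] [LieAlgebra R L₂] (𝒜 : ι → Submodule R L₁)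
    [Decomposition 𝒜] (Φ : L₁ →ₗ[R] L₂)
    (h : ∀ i j, ∀ x ∈ 𝒜 i, ∀ y ∈ 𝒜 j, Φ ⁅x, y⁆ = ⁅Φ x, Φ y⁆) (x y : L₁) :
    Φ ⁅x, y⁆ = ⁅Φ x, Φ y⁆ := by
  induction x using Decomposition.inductionOn 𝒜 with
  | zero => simp
  | @homogeneous i x =>
    induction y using Decomposition.inductionOn 𝒜 with
    | zero => simp
    | @homogeneous j y => exact h i j x x.2 y y.2
    | add y y' hy hy' => simp only [lie_add, map_add, hy, hy']
  | add x x' hx hx' => simp only [add_lie, map_add, hx, hx']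

theorem stmt17_general (F G L₁ L₂ : Type*) [Field F] [Group G] [DecidableEq G]
    [LieRing L₁] [LieAlgebra F L₁] [LieRing L₂] [LieAlgebra F L₂]
    (ℒ₁ : G → Submodule F L₁) (ℒ₂ : G → Submodule F L₂)
    [DirectSum.Decomposition ℒ₁] [DirectSum.Decomposition ℒ₂]
    (hbr₁ : ∀ g h : G, ∀ x ∈ ℒ₁ g, ∀ y ∈ ℒ₁ h, ⁅x, y⁆ ∈ ℒ₁ (g * h))
    (hbr₂ : ∀ g h : G, ∀ x ∈ ℒ₂ g, ∀ y ∈ ℒ₂ h, ⁅x, y⁆ ∈ ℒ₂ (g * h))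
    (hz₁ : ∀ g : G, ∀ x ∈ LieAlgebra.center F L₁,
      (DirectSum.decompose ℒ₁ x g : L₁) ∈ LieAlgebra.center F L₁)
    (hz₂ : ∀ g : G, ∀ x ∈ LieAlgebra.center F L₂,
      (DirectSum.decompose ℒ₂ x g : L₂) ∈ LieAlgebra.center F L₂)
    (ψ : L₁ ≃ₗ⁅F⁆ L₂)
    (hψz : ∀ g : G, ∀ x ∈ LieAlgebra.center F L₁, x ∈ ℒ₁ g → ψ x ∈ ℒ₂ g)
    (hψq : ∀ g : G, ∀ x ∈ ℒ₁ g, ∃ z ∈ LieAlgebra.center F L₂, ψ x + z ∈ ℒ₂ g) :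
    ∃ φ : L₁ ≃ₗ⁅F⁆ L₂, ∀ g : G, ∀ x ∈ ℒ₁ g, φ x ∈ ℒ₂ g := by
  set Φ := LinearMap.gradedPart ℒ₁ ℒ₂ ψ.toLinearMap
  have hΦψ : ∀ x, Φ x - ψ x ∈ LieAlgebra.center F L₂ :=
    LinearMap.gradedPart_sub_mem _ (fun g _ hx => hz₂ g _ hx) hψq
  have hΦcenter : ∀ x ∈ LieAlgebra.center F L₁, Φ x = ψ x := fun _ hx =>
    LinearMap.gradedPart_apply_eq_of_mem _ (fun g _ hx => hz₁ g _ hx) hψz hx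
  have hΦlie : ∀ x y, Φ ⁅x, y⁆ = ⁅Φ x, Φ y⁆ :=
    Φ.map_lie_of_homogeneous ℒ₁ fun g h x hx y hy => by
      rw [LinearMap.gradedPart_apply_of_mem _ (hbr₁ g h x hx y hy), LieHom.coe_toLinearMap,
        ← ψ.toLieHom.lie_eq_of_sub_mem_center hΦψ, decompose_of_mem_same ℒ₂
          (hbr₂ g h _ (LinearMap.gradedPart_mem _ hx) _ (LinearMap.gradedPart_mem _ hy))]
  exact ⟨LieEquiv.ofBijective { Φ with map_lie' := hΦlie _ _ }
      (ψ.bijective_of_sub_mem_center Φ hΦψ hΦcenter),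
    fun g x hx => LinearMap.gradedPart_mem _ hx⟩

/-- if `ψ : L₁ → L₂` is an ungraded Lie algebra isomorphism between
`G`-graded Lie algebras (with graded centers) that restricts to a graded isomorphism
of the centers and induces a graded isomorphism on the central quotients, then `L₁`
and `L₂` are isomorphic as `G`-graded Lie algebras. -/
theorem stmt17 (F G L₁ L₂ : Type*) [Field F] [Group G] [DecidableEq G]
    [LieRing L₁] [LieAlgebra F L₁] [LieRing L₂] [LieAlgebra F L₂]
    (ℒ₁ : G → Submodule F L₁) (ℒ₂ : G → Submodule F L₂)
    [DirectSum.Decomposition ℒ₁] [DirectSum.Decomposition ℒ₂]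
    (hbr₁ : ∀ g h : G, ∀ x ∈ ℒ₁ g, ∀ y ∈ ℒ₁ h, ⁅x, y⁆ ∈ ℒ₁ (g * h))
    (hbr₂ : ∀ g h : G, ∀ x ∈ ℒ₂ g, ∀ y ∈ ℒ₂ h, ⁅x, y⁆ ∈ ℒ₂ (g * h))
    (hz₁ : ∀ g : G, ∀ x ∈ LieAlgebra.center F L₁,
      (DirectSum.decompose ℒ₁ x g : L₁) ∈ LieAlgebra.center F L₁)
    (hz₂ : ∀ g : G, ∀ x ∈ LieAlgebra.center F L₂,
      (DirectSum.decompose ℒ₂ x g : L₂) ∈ LieAlgebra.center F L₂)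
    (ψ : L₁ ≃ₗ⁅F⁆ L₂)
    (hψz : ∀ g : G, ∀ x ∈ LieAlgebra.center F L₁, x ∈ ℒ₁ g → ψ x ∈ ℒ₂ g)
    (hψz' : ∀ g : G, ∀ y ∈ LieAlgebra.center F L₂, y ∈ ℒ₂ g → ψ.symm y ∈ ℒ₁ g)
    (hψq : ∀ g : G, ∀ x ∈ ℒ₁ g, ∃ z ∈ LieAlgebra.center F L₂, ψ x + z ∈ ℒ₂ g)
    (hψq' : ∀ g : G, ∀ y ∈ ℒ₂ g, ∃ z ∈ LieAlgebra.center F L₁, ψ.symm y + z ∈ ℒ₁ g) :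
    ∃ φ : L₁ ≃ₗ⁅F⁆ L₂, ∀ g : G, ∀ x ∈ ℒ₁ g, φ x ∈ ℒ₂ g :=
  stmt17_general F G L₁ L₂ ℒ₁ ℒ₂ hbr₁ hbr₂ hz₁ hz₂ ψ hψz hψq
end

section
/- Let F be a field with char F ≠ 2, G a group, n ≥ 2, g ∈ G with g² = 1, and η = (g_1,…,g_{n−1}) a symmetric sequence (g_i = g_{n−i}) of elements commuting with each other and with g. Define X_{ij}^± = e_{ij} ± e_{n−j+1,n−i+1}. Then the assignment deg X_{ij}^{(−1)^{j−i}·±} determined by deg X_{ii}^− = 1, deg X_{ii}^+ = g, deg X_{i,i+1}^− = g_i, deg X_{i,i+1}^+ = g·g_i extends to a consistent G-grading of the Lie algebra UT_n^(-) in which every X_{ij}^± is homogeneous of degree g^{ε} g_i g_{i+1}⋯g_{j−1} for the appropriate ε ∈ {0,1}; in particular it is a G-grading: brackets of components multiply degrees. -/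
/-!
Write `X_{ij}^s = e_{ij} + s e_{n-1-j,n-1-i}` for `s = ±1`. When `s² = t² = 1`, the bracket
`⁅X_{ij}^s, X_{kl}^t⁆` is a combination of at most four matrices `X^{-st}`, whose index intervals
are concatenations of `[i, j)` and `[k, l)` or of their mirror images `[n-1-j, n-1-i)`. As `η` is
palindromic and its entries commute with each other and with `g`, the degree `η_i ⋯ η_{j-1}` is
multiplicative under concatenation and invariant under mirroring, and the sign contributes a
factor `g` exactly when it is `+`, which is multiplicative because `g² = 1`. Hence brackets of
homogeneous elements are homogeneous of the product degree. The components span the upper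
triangular matrices because `2 e_{ij} = X_{ij}^- + X_{ij}^+` and `2 ≠ 0` in `F`.
-/

/-- The matrix unit `e_{ab}` (0-indexed), or `0` if an index is out of range. -/
def Eij (F : Type*) [Field F] (n a b : ℕ) : Matrix (Fin n) (Fin n) F :=
  if h : a < n ∧ b < n then Matrix.single ⟨a, h.1⟩ ⟨b, h.2⟩ 1 else 0

lemma Submodule.lie_mem_of_mem_span {R A : Type*} [CommRing R] [Ring A] [Algebra R A]
    {s t : Set A} {p : Submodule R A} (h : ∀ x ∈ s, ∀ y ∈ t, ⁅x, y⁆ ∈ p) {a b : A}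
    (ha : a ∈ Submodule.span R s) (hb : b ∈ Submodule.span R t) : ⁅a, b⁆ ∈ p := by
  let f : A →ₗ[R] A →ₗ[R] A := LinearMap.mul R A - (LinearMap.mul R A).flip
  have hf : ∀ x y, f x y = ⁅x, y⁆ := fun x y => (Ring.lie_def x y).symm
  have hspan := Submodule.apply_mem_map₂ f ha hb
  rw [Submodule.map₂_span_span, hf] at hspan
  refine Submodule.span_le.2 ?_ hspan
  rintro _ ⟨x, hx, y, hy, rfl⟩
  change f x y ∈ p
  exact hf x y ▸ h x hx y hy

section EtaProd

variable {M : Type*} [Monoid M]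

def etaProd (η : ℕ → M) (i j : ℕ) : M := ((List.range (j - i)).map (fun k => η (i + k))).prod

lemma etaProd_eq_prod_range' (η : ℕ → M) (i j : ℕ) :
    etaProd η i j = ((List.range' i (j - i)).map η).prod := by
  rw [etaProd, List.range'_eq_map_range, List.map_map]
  rfl

lemma etaProd_mul_etaProd (η : ℕ → M) {i j k : ℕ} (hij : i ≤ j) (hjk : j ≤ k) :
    etaProd η i j * etaProd η j k = etaProd η i k := by
  have hsplit := List.range'_append (s := i) (m := j - i) (n := k - j) (step := 1)
  rw [one_mul, Nat.add_sub_cancel' hij, show j - i + (k - j) = k - i by omega] at hsplit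
  rw [etaProd_eq_prod_range', etaProd_eq_prod_range', etaProd_eq_prod_range', ← List.prod_append,
    ← List.map_append, hsplit]

lemma commute_etaProd {η : ℕ → M} {x : M} (hx : ∀ k, Commute x (η k)) (i j : ℕ) :
    Commute x (etaProd η i j) :=
  Commute.list_prod_right _ _ fun _ hy => by
    obtain ⟨_, -, rfl⟩ := List.mem_map.1 hy
    exact hx _

lemma etaProd_commute {η : ℕ → M} (hcomm : ∀ k l, Commute (η k) (η l)) (i j k l : ℕ) :
    Commute (etaProd η i j) (etaProd η k l) :=
  commute_etaProd (fun _ => (commute_etaProd (fun _ => hcomm _ _) i j).symm) k l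

lemma etaProd_reflect {η : ℕ → M} {n : ℕ} (hsym : ∀ k < n - 1, η k = η (n - 2 - k))
    (hcomm : ∀ k l, Commute (η k) (η l)) {i j : ℕ} (hij : i ≤ j) (hjn : j < n) :
    etaProd η i j = etaProd η (n - 1 - j) (n - 1 - i) := by
  have hlen : n - 1 - i - (n - 1 - j) = j - i := by omega
  have hrev :
      (List.range' (n - 1 - j) (j - i)).map η = ((List.range' i (j - i)).map η).reverse := by
    rw [← List.map_reverse, List.reverse_range', List.range'_eq_map_range, List.map_map,
      List.map_map]
    refine List.map_congr_left fun x hx => ?_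
    rw [List.mem_range] at hx
    simp only [Function.comp_apply]
    rw [hsym _ (by omega)]
    congr 1
    omega
  rw [etaProd_eq_prod_range', etaProd_eq_prod_range', hlen, hrev]
  exact List.Perm.prod_eq' (List.reverse_perm _).symm
    (List.pairwise_map.2 (List.pairwise_of_forall fun _ _ => hcomm _ _))

end EtaProd

section MatrixUnits

variable (F : Type*) [Field F] (n : ℕ)

lemma Eij_mul (a b c d : ℕ) :
    Eij F n a b * Eij F n c d = if b = c ∧ b < n then Eij F n a d else 0 := by
  unfold Eij
  split_ifs <;> first
    | omega
    | simp_all [Matrix.single_mul_single_same, Matrix.single_mul_single_of_ne, Fin.ext_iff]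

lemma Eij_eq_single (i j : Fin n) : Eij F n i j = Matrix.single i j 1 := by
  rw [Eij, dif_pos ⟨i.2, j.2⟩]

def Xpm (i j : ℕ) (s : F) : Matrix (Fin n) (Fin n) F :=
  Eij F n i j + s • Eij F n (n - 1 - j) (n - 1 - i)

lemma lie_Xpm_Xpm {i j k l : ℕ} (hi : i < n) (hj : j < n) (hk : k < n) (hl : l < n) {s t : F}
    (hs : s * s = 1) (ht : t * t = 1) :
    ⁅Xpm F n i j s, Xpm F n k l t⁆ =
      (if j = k then Xpm F n i l (-(s * t)) else 0)
      - (if l = i then Xpm F n k j (-(s * t)) else 0)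
      + (if j = n - 1 - l then t • Xpm F n i (n - 1 - k) (-(s * t)) else 0)
      + (if n - 1 - i = k then s • Xpm F n (n - 1 - j) l (-(s * t)) else 0) := by
  rw [Ring.lie_def]
  simp only [Xpm, add_mul, mul_add, smul_mul_assoc, mul_smul_comm, smul_smul, smul_add, Eij_mul,
    show n - 1 - (n - 1 - k) = k by omega, show n - 1 - (n - 1 - j) = j by omega]
  -- bring the conditions produced by `Eij_mul` to the four of the right-hand side
  simp only [show (j = k ∧ j < n) = (j = k) by rw [eq_iff_iff]; omega,
    show (j = n - 1 - l ∧ j < n) = (j = n - 1 - l) by rw [eq_iff_iff]; omega,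
    show (n - 1 - i = k ∧ n - 1 - i < n) = (n - 1 - i = k) by rw [eq_iff_iff]; omega,
    show (n - 1 - i = n - 1 - l ∧ n - 1 - i < n) = (l = i) by rw [eq_iff_iff]; omega,
    show (l = i ∧ l < n) = (l = i) by rw [eq_iff_iff]; omega,
    show (l = n - 1 - j ∧ l < n) = (j = n - 1 - l) by rw [eq_iff_iff]; omega,
    show (n - 1 - k = i ∧ n - 1 - k < n) = (n - 1 - i = k) by rw [eq_iff_iff]; omega,
    show (n - 1 - k = n - 1 - j ∧ n - 1 - k < n) = (j = k) by rw [eq_iff_iff]; omega]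
  split_ifs <;> match_scalars <;>
    first
      | ring1
      | linear_combination (-s) * ht
      | linear_combination (-t) * hs
      | linear_combination s * ht
      | linear_combination t * hs

end MatrixUnits

section Grading

variable {G : Type*} [Group G]

-- `b = true` encodes `X^+` and `b = false` encodes `X^-`.
def pmSign (F : Type*) [Field F] (b : Bool) : F := if b then 1 else -1

def pmTwist (g : G) (b : Bool) : G := if b then g else 1

lemma pmSign_mul_self (F : Type*) [Field F] (b : Bool) : pmSign F b * pmSign F b = 1 := by
  cases b <;> simp [pmSign]

lemma pmSign_xor (F : Type*) [Field F] (b c : Bool) :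
    pmSign F (xor b c) = -(pmSign F b * pmSign F c) := by
  cases b <;> cases c <;> simp [pmSign]

lemma pmTwist_mul_pmTwist {g : G} (hg : g * g = 1) (b c : Bool) :
    pmTwist g b * pmTwist g c = pmTwist g (xor b c) := by
  cases b <;> cases c <;> simp [pmTwist, hg]

lemma commute_pmTwist {g x : G} (hx : Commute g x) (b : Bool) : Commute (pmTwist g b) x := by
  cases b
  exacts [Commute.one_left x, hx]

variable (F : Type*) [Field F] (n : ℕ) (g : G) (η : ℕ → G)

def gradedComponent (h : G) : Submodule F (Matrix (Fin n) (Fin n) F) :=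
  Submodule.span F {x | ∃ i j b, i ≤ j ∧ j < n ∧ x = Xpm F n i j (pmSign F b) ∧
    pmTwist g b * etaProd η i j = h}

variable {F n g η}

lemma Xpm_mem_gradedComponent {i j : ℕ} (hij : i ≤ j) (hjn : j < n) {b : Bool} {h : G}
    (hdeg : pmTwist g b * etaProd η i j = h) :
    Xpm F n i j (pmSign F b) ∈ gradedComponent F n g η h :=
  Submodule.subset_span ⟨i, j, b, hij, hjn, rfl, hdeg⟩

lemma pmTwist_mul_pmTwist_mul {g x y : G} (hg : g * g = 1) (hx : Commute g x) (b c : Bool) :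
    pmTwist g b * x * (pmTwist g c * y) = pmTwist g (xor b c) * (x * y) := by
  rw [← pmTwist_mul_pmTwist hg, mul_assoc, ← mul_assoc x, (commute_pmTwist hx c).eq.symm]
  simp only [mul_assoc]

lemma lie_Xpm_mem_gradedComponent (hg : g * g = 1) (hsym : ∀ k < n - 1, η k = η (n - 2 - k))
    (hcomm : ∀ k l, Commute (η k) (η l)) (hgc : ∀ k, Commute g (η k))
    {i j k l : ℕ} (hij : i ≤ j) (hjn : j < n) (hkl : k ≤ l) (hln : l < n) (b c : Bool) :
    ⁅Xpm F n i j (pmSign F b), Xpm F n k l (pmSign F c)⁆ ∈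
      gradedComponent F n g η (pmTwist g b * etaProd η i j * (pmTwist g c * etaProd η k l)) := by
  rw [lie_Xpm_Xpm F n (by omega) hjn (by omega) hln (pmSign_mul_self F b) (pmSign_mul_self F c),
    ← pmSign_xor, pmTwist_mul_pmTwist_mul hg (commute_etaProd hgc i j)]
  refine add_mem (add_mem (sub_mem ?_ ?_) ?_) ?_ <;> split_ifs with hc <;>
    first | exact zero_mem _ | refine Submodule.smul_mem _ _ ?_ | skip
  · refine Xpm_mem_gradedComponent (by omega) hln ?_
    rw [← hc, etaProd_mul_etaProd η hij (hc ▸ hkl)]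
  · refine Xpm_mem_gradedComponent (by omega) hjn ?_
    rw [hc, (etaProd_commute hcomm i j k i).eq, etaProd_mul_etaProd η (hc ▸ hkl) hij]
  · refine Xpm_mem_gradedComponent (by omega) (by omega) ?_
    rw [etaProd_reflect hsym hcomm hkl hln, ← hc, etaProd_mul_etaProd η hij (by omega)]
  · refine Xpm_mem_gradedComponent (by omega) hln ?_
    rw [etaProd_reflect hsym hcomm hij hjn, hc, etaProd_mul_etaProd η (by omega) hkl]

lemma lie_mem_gradedComponent (hg : g * g = 1) (hsym : ∀ k < n - 1, η k = η (n - 2 - k))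
    (hcomm : ∀ k l, Commute (η k) (η l)) (hgc : ∀ k, Commute g (η k)) {h h' : G}
    {a b : Matrix (Fin n) (Fin n) F} (ha : a ∈ gradedComponent F n g η h)
    (hb : b ∈ gradedComponent F n g η h') : ⁅a, b⁆ ∈ gradedComponent F n g η (h * h') := by
  refine Submodule.lie_mem_of_mem_span ?_ ha hb
  rintro _ ⟨i, j, s, hij, hjn, rfl, rfl⟩ _ ⟨k, l, t, hkl, hln, rfl, rfl⟩
  exact lie_Xpm_mem_gradedComponent hg hsym hcomm hgc hij hjn hkl hln s t

lemma mem_iSup_gradedComponent (hchar : (2 : F) ≠ 0) {x : Matrix (Fin n) (Fin n) F}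
    (hx : ∀ i j : Fin n, j < i → x i j = 0) : x ∈ ⨆ h, gradedComponent F n g η h := by
  rw [Matrix.matrix_eq_sum_single x]
  refine Submodule.sum_mem _ fun i _ => Submodule.sum_mem _ fun j _ => ?_
  rcases lt_or_ge j i with hji | hij
  · rw [hx i j hji, Matrix.single_zero]
    exact zero_mem _
  have hsum : Xpm F n i j (pmSign F false) + Xpm F n i j (pmSign F true) =
      (2 : F) • Matrix.single i j 1 := by
    simp only [← Eij_eq_single, Xpm, pmSign, Bool.false_eq_true, ↓reduceIte]
    module
  have hmem (b : Bool) : Xpm F n i j (pmSign F b) ∈ ⨆ h, gradedComponent F n g η h :=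
    Submodule.mem_iSup_of_mem _ (Xpm_mem_gradedComponent hij j.2 rfl)
  rw [← mul_one (x i j), ← smul_eq_mul, ← Matrix.smul_single, ← inv_smul_smul₀ hchar
    (Matrix.single i j 1), ← hsum]
  exact Submodule.smul_mem _ _ (Submodule.smul_mem _ _ (add_mem (hmem false) (hmem true)))

lemma gradedComponent_eq_span (h : G) :
    gradedComponent F n g η h = Submodule.span F
      ({x | ∃ i j : ℕ, i ≤ j ∧ j < n ∧
          x = Eij F n i j - Eij F n (n - 1 - j) (n - 1 - i) ∧ etaProd η i j = h}
        ∪ {x | ∃ i j : ℕ, i ≤ j ∧ j < n ∧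
          x = Eij F n i j + Eij F n (n - 1 - j) (n - 1 - i) ∧ g * etaProd η i j = h}) := by
  have hminus (i j : ℕ) :
      Xpm F n i j (pmSign F false) = Eij F n i j - Eij F n (n - 1 - j) (n - 1 - i) := by
    simp [Xpm, pmSign, sub_eq_add_neg]
  have hplus (i j : ℕ) :
      Xpm F n i j (pmSign F true) = Eij F n i j + Eij F n (n - 1 - j) (n - 1 - i) := by
    simp [Xpm, pmSign]
  rw [gradedComponent]
  congr 1
  ext x
  constructor
  · rintro ⟨i, j, (_ | _), hij, hjn, rfl, rfl⟩
    · exact Or.inl ⟨i, j, hij, hjn, hminus i j, (one_mul _).symm⟩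
    · exact Or.inr ⟨i, j, hij, hjn, hplus i j, rfl⟩
  · rintro (⟨i, j, hij, hjn, rfl, hdeg⟩ | ⟨i, j, hij, hjn, rfl, hdeg⟩)
    · exact ⟨i, j, false, hij, hjn, (hminus i j).symm, (one_mul _).trans hdeg⟩
    · exact ⟨i, j, true, hij, hjn, (hplus i j).symm, hdeg⟩

end Grading

-- Indices are 0-based: `η k` is the paper's `g_{k+1}`, so `dm i j` is the degree
-- `g_{i+1} ⋯ g_j` of the paper's `X_{i+1,j+1}^-`.
theorem stmt18_general (F G : Type*) [Field F] [Group G] (hchar : (2 : F) ≠ 0)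
    (n : ℕ) (g : G) (hg : g * g = 1)
    (η : ℕ → G)
    (hsym : ∀ k : ℕ, k < n - 1 → η k = η (n - 2 - k))
    (hcomm : ∀ k l : ℕ, η k * η l = η l * η k)
    (hgc : ∀ k : ℕ, g * η k = η k * g) :
    let dm : ℕ → ℕ → G := fun i j => ((List.range (j - i)).map (fun k => η (i + k))).prod
    let U : G → Submodule F (Matrix (Fin n) (Fin n) F) := fun h =>
      Submodule.span F
        ({x | ∃ i j : ℕ, i ≤ j ∧ j < n ∧
            x = Eij F n i j - Eij F n (n - 1 - j) (n - 1 - i) ∧ dm i j = h}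
          ∪ {x | ∃ i j : ℕ, i ≤ j ∧ j < n ∧
            x = Eij F n i j + Eij F n (n - 1 - j) (n - 1 - i) ∧ g * dm i j = h})
    (∀ x : Matrix (Fin n) (Fin n) F,
        (∀ i j : Fin n, j < i → x i j = 0) → x ∈ ⨆ h, U h)
      ∧ ∀ h h' : G, ∀ a ∈ U h, ∀ b ∈ U h', ⁅a, b⁆ ∈ U (h * h') := by
  intro dm U
  have hU : U = gradedComponent F n g η := funext fun h => (gradedComponent_eq_span h).symm
  rw [hU]
  exact ⟨fun x hx => mem_iSup_gradedComponent hchar hx,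
    fun h h' a ha b hb => lie_mem_gradedComponent hg hsym hcomm hgc ha hb⟩

/-- the Type 2 assignment, where (0-indexed)
`X_{ij}^± = e_{ij} ± e_{n−1−j,n−1−i}` with `deg X_{ij}^- = η_i ⋯ η_{j−1}` and
`deg X_{ij}^+ = g · η_i ⋯ η_{j−1}` (so `deg X_{ii}^- = 1`, `deg X_{ii}^+ = g`,
`deg X_{i,i+1}^- = η_i`, `deg X_{i,i+1}^+ = g·η_i`), gives a consistent `G`-grading
`Γ₂(g, η)` of `UT_n^(-)`: every `X_{ij}^±` is homogeneous, the components span the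
upper triangular matrices, and brackets of components multiply degrees. -/
theorem stmt18 (F G : Type*) [Field F] [Group G] (hchar : (2 : F) ≠ 0)
    (n : ℕ) (hn : 2 ≤ n) (g : G) (hg : g * g = 1)
    (η : ℕ → G)
    (hsym : ∀ k : ℕ, k < n - 1 → η k = η (n - 2 - k))
    (hcomm : ∀ k l : ℕ, η k * η l = η l * η k)
    (hgc : ∀ k : ℕ, g * η k = η k * g) :
    let dm : ℕ → ℕ → G := fun i j => ((List.range (j - i)).map (fun k => η (i + k))).prod
    let U : G → Submodule F (Matrix (Fin n) (Fin n) F) := fun h =>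
      Submodule.span F
        ({x | ∃ i j : ℕ, i ≤ j ∧ j < n ∧
            x = Eij F n i j - Eij F n (n - 1 - j) (n - 1 - i) ∧ dm i j = h}
          ∪ {x | ∃ i j : ℕ, i ≤ j ∧ j < n ∧
            x = Eij F n i j + Eij F n (n - 1 - j) (n - 1 - i) ∧ g * dm i j = h})
    (∀ x : Matrix (Fin n) (Fin n) F,
        (∀ i j : Fin n, j < i → x i j = 0) → x ∈ ⨆ h, U h)
      ∧ ∀ h h' : G, ∀ a ∈ U h, ∀ b ∈ U h', ⁅a, b⁆ ∈ U (h * h') :=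
  stmt18_general F G hchar n g hg η hsym hcomm hgc
end

section
/- Let F be a field, G a group, n ≥ 2, and Γ a G-grading on the Lie algebra UT_n^(-) in which, for every 1 ≤ i ≤ j ≤ n, the matrix unit e_{ij} is homogeneous. Consider the induced grading on the quotient U = UT_n^(-)/F·I. Then a multilinear G-graded Lie polynomial is a graded identity of U if and only if it is a graded identity of (UT_n^(-), Γ') where Γ' is the elementary grading with deg e_{ii} replaced by 1 and deg I = 1 (i.e. changing only the degree of the identity matrix does not change the graded identities of the central quotient). -/
/-!
The grading `Γ` already is `Γ'`: bracketing `e_{ii}` with an off-diagonal unit `e_{ij}` or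
`e_{ji}` returns that unit up to sign, which forces `deg e_{ii} = 1`, and an independent family
containing the elementary grading `Γ'` and covering the same space must equal it.

Since every bracket annihilates the identity matrix, shifting the values of the variables by
scalar matrices shifts the value of a Lie polynomial by a scalar matrix only; so identities of
`(UT_n^(-), Γ')` are identities of the quotient. Conversely, if a graded substitution gives a
scalar matrix `t • 1`, then `t = 0`: a multilinear polynomial either consists of brackets, whose
values have zero diagonal, or is `c • x` in a single variable; then either `deg x ≠ 1` and the
homogeneous matrices of degree `deg x` have zero diagonal, or `deg x = 1` and substituting a
diagonal unit `e_{ii}` shows `c = 0`.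
-/

/-- Formal Lie monomials (bracket words) in `m` variables. -/
inductive LieWord (m : ℕ) where
  | var : Fin m → LieWord m
  | br : LieWord m → LieWord m → LieWord m

/-- Evaluation of a Lie word in a Lie ring under a substitution `v`. -/
def LieWord.eval {m : ℕ} {L : Type*} [LieRing L] (v : Fin m → L) : LieWord m → L
  | .var k => v k
  | .br w₁ w₂ => ⁅w₁.eval v, w₂.eval v⁆

/-- The multiset of variables occurring in a Lie word (with multiplicity). -/
def LieWord.vars {m : ℕ} : LieWord m → Multiset (Fin m)
  | .var k => {k}
  | .br w₁ w₂ => w₁.vars + w₂.vars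

/-- Evaluation of a formal linear combination of Lie words (a Lie polynomial). -/
def evalPoly {m : ℕ} {F L : Type*} [Field F] [LieRing L] [LieAlgebra F L]
    (P : List (F × LieWord m)) (v : Fin m → L) : L :=
  (P.map (fun p => p.1 • p.2.eval v)).sum

attribute [local instance] LieRing.ofAssociativeRing

open Matrix

namespace LieWord

variable {m : ℕ}

lemma card_vars_pos : ∀ w : LieWord m, 0 < Multiset.card w.vars
  | .var _ => by simp [vars]
  | .br w₁ _ => by
      simp only [vars, Multiset.card_add]
      exact Nat.add_pos_left (card_vars_pos w₁) _

lemma eq_var_of_vars_eq_singleton {w : LieWord m} {k : Fin m} (h : w.vars = {k}) :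
    w = .var k := by
  cases w with
  | var k' => simpa [vars] using h
  | br w₁ w₂ =>
    have hcard := congrArg Multiset.card h
    simp only [vars, Multiset.card_add, Multiset.card_singleton] at hcard
    have := card_vars_pos w₁
    have := card_vars_pos w₂
    omega

lemma multilinear_cases {R : Type*} {P : List (R × LieWord m)}
    (hmulti : ∀ p ∈ P, p.2.vars = (Finset.univ.val : Multiset (Fin m))) :
    (∀ p ∈ P, ∃ w₁ w₂, p.2 = .br w₁ w₂) ∨ ∃ k, ∀ p ∈ P, p.2 = .var k := by
  by_cases hbr : ∀ p ∈ P, ∃ w₁ w₂, p.2 = .br w₁ w₂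
  · exact .inl hbr
  push Not at hbr
  obtain ⟨p₀, hp₀, hp₀br⟩ := hbr
  obtain ⟨k, hk⟩ : ∃ k, p₀.2 = .var k := by
    cases h : p₀.2 with
    | var k => exact ⟨k, rfl⟩
    | br w₁ w₂ => exact absurd h (hp₀br w₁ w₂)
  have huniv : (Finset.univ.val : Multiset (Fin m)) = {k} := by
    rw [← hmulti p₀ hp₀, hk]
    rfl
  exact .inr ⟨k, fun p hp => eq_var_of_vars_eq_singleton ((hmulti p hp).trans huniv)⟩

end LieWord

section CentralShift

variable {F L : Type*} [Field F] [LieRing L] [LieAlgebra F L] {m : ℕ} {Z : Submodule F L}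

lemma LieWord.eval_sub_mem_of_central (hZ : ∀ z ∈ Z, ∀ x : L, ⁅x, z⁆ = 0)
    {v u : Fin m → L} (hvu : ∀ k, v k - u k ∈ Z) : ∀ w : LieWord m, w.eval v - w.eval u ∈ Z
  | .var k => hvu k
  | .br w₁ w₂ => by
    have hz₁ := eval_sub_mem_of_central hZ hvu w₁
    have hz₂ := eval_sub_mem_of_central hZ hvu w₂
    have hbr : ⁅w₁.eval v, w₂.eval v⁆ = ⁅w₁.eval u, w₂.eval u⁆ := by
      rw [← sub_add_cancel (w₁.eval v) (w₁.eval u), ← sub_add_cancel (w₂.eval v) (w₂.eval u),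
        add_lie, lie_add, lie_add, hZ _ hz₂, hZ _ hz₂, ← lie_skew, hZ _ hz₁, neg_zero]
      simp
    simp [eval, hbr]

lemma evalPoly_sub_mem_of_central (hZ : ∀ z ∈ Z, ∀ x : L, ⁅x, z⁆ = 0)
    {v u : Fin m → L} (hvu : ∀ k, v k - u k ∈ Z) (P : List (F × LieWord m)) :
    evalPoly P v - evalPoly P u ∈ Z := by
  induction P with
  | nil => simp [evalPoly]
  | cons p P ih =>
    have hsplit : evalPoly (p :: P) v - evalPoly (p :: P) u =
        p.1 • (p.2.eval v - p.2.eval u) + (evalPoly P v - evalPoly P u) := by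
      simp only [evalPoly, List.map_cons, List.sum_cons, smul_sub]
      abel
    rw [hsplit]
    exact Z.add_mem (Z.smul_mem _ (LieWord.eval_sub_mem_of_central hZ hvu _)) ih

lemma evalPoly_mem_of_forall_mem_sup {ι : Type*} (hZ : ∀ z ∈ Z, ∀ x : L, ⁅x, z⁆ = 0)
    (U : ι → Submodule F L) (d : Fin m → ι) (P : List (F × LieWord m))
    (hP : ∀ u : Fin m → L, (∀ k, u k ∈ U (d k)) → evalPoly P u = 0)
    (v : Fin m → L) (hv : ∀ k, v k ∈ U (d k) ⊔ Z) : evalPoly P v ∈ Z := by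
  choose u hu z hz hvuz using fun k => Submodule.mem_sup.mp (hv k)
  have hvu : ∀ k, v k - u k ∈ Z := fun k => by
    rw [← hvuz k, add_sub_cancel_left]
    exact hz k
  simpa [hP u hu] using evalPoly_sub_mem_of_central hZ hvu P

lemma evalPoly_eq_smul_of_forall_eq_var {P : List (F × LieWord m)} {k : Fin m}
    (hvar : ∀ p ∈ P, p.2 = .var k) (v : Fin m → L) :
    evalPoly P v = (P.map Prod.fst).sum • v k := by
  induction P with
  | nil => simp [evalPoly]
  | cons p P ih =>
    simp only [evalPoly, List.map_cons, List.sum_cons] at ih ⊢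
    rw [ih fun q hq => hvar q (List.mem_cons_of_mem p hq), hvar p List.mem_cons_self, add_smul]
    rfl

end CentralShift

section Grading

lemma iSupIndep.eq_of_le_of_iSup_le {α ι : Type*} [CompleteLattice α] [IsModularLattice α]
    {f g : ι → α} (hg : iSupIndep g) (hfg : f ≤ g) (hsup : ⨆ i, g i ≤ ⨆ i, f i) : f = g := by
  funext i
  refine le_antisymm (hfg i) (le_of_eq ?_)
  have hdisj : Disjoint (g i) (⨆ (j) (_ : j ≠ i), f j) :=
    (hg i).mono_right (iSup₂_mono fun j _ => hfg j)
  have hcover : g i ≤ f i ⊔ ⨆ (j) (_ : j ≠ i), f j := by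
    rw [← iSup_split_single f i]
    exact (le_iSup g i).trans hsup
  calc g i = (f i ⊔ ⨆ (j) (_ : j ≠ i), f j) ⊓ g i := (inf_eq_right.mpr hcover).symm
    _ = f i ⊔ (⨆ (j) (_ : j ≠ i), f j) ⊓ g i := sup_inf_assoc_of_le _ (hfg i)
    _ = f i := by rw [hdisj.symm.eq_bot, sup_bot_eq]

lemma eq_one_of_smul_mem_mul {F M G : Type*} [Field F] [AddCommGroup M] [Module F M]
    [Monoid G] [IsRightCancelMul G] {U : G → Submodule F M} (hind : iSupIndep U)
    {g h : G} {y : M} {c : F} (hc : c ≠ 0) (hy₀ : y ≠ 0) (hy : y ∈ U h)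
    (hcy : c • y ∈ U (g * h)) : g = 1 := by
  by_contra hg
  have hne : g * h ≠ h := fun H => hg (mul_eq_right.mp H)
  exact smul_ne_zero hc hy₀
    (Submodule.disjoint_def.mp (hind.pairwiseDisjoint hne) _ hcy ((U h).smul_mem c hy))

end Grading

section UpperTriangular

variable {R ι : Type*} [CommRing R] [Fintype ι] [LinearOrder ι] {a b : Matrix ι ι R}

lemma Matrix.IsUpperTriangular.mul_apply_self (ha : a.IsUpperTriangular)
    (hb : b.IsUpperTriangular) (i : ι) : (a * b) i i = a i i * b i i := by
  rw [mul_apply]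
  refine Finset.sum_eq_single i (fun k _ hk => ?_) (by simp)
  rcases hk.lt_or_gt with h | h
  · rw [ha h, zero_mul]
  · rw [hb h, mul_zero]

lemma Matrix.IsUpperTriangular.lie (ha : a.IsUpperTriangular) (hb : b.IsUpperTriangular) :
    (⁅a, b⁆ : Matrix ι ι R).IsUpperTriangular := by
  rw [Ring.lie_def]
  exact (ha.mul hb).sub (hb.mul ha)

lemma Matrix.IsUpperTriangular.lie_apply_self (ha : a.IsUpperTriangular)
    (hb : b.IsUpperTriangular) (i : ι) : (⁅a, b⁆ : Matrix ι ι R) i i = 0 := by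
  rw [Ring.lie_def, sub_apply, ha.mul_apply_self hb, hb.mul_apply_self ha, mul_comm, sub_self]

variable {m : ℕ}

lemma LieWord.eval_isUpperTriangular {v : Fin m → Matrix ι ι R}
    (hv : ∀ k, (v k).IsUpperTriangular) : ∀ w : LieWord m, (w.eval v).IsUpperTriangular
  | .var k => hv k
  | .br w₁ w₂ => (eval_isUpperTriangular hv w₁).lie (eval_isUpperTriangular hv w₂)

lemma evalPoly_apply_self_eq_zero {F : Type*} [Field F] {v : Fin m → Matrix ι ι F}
    {P : List (F × LieWord m)} (hbr : ∀ p ∈ P, ∃ w₁ w₂, p.2 = .br w₁ w₂)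
    (hv : ∀ k, (v k).IsUpperTriangular) (i : ι) : evalPoly P v i i = 0 := by
  induction P with
  | nil => simp [evalPoly]
  | cons p P ih =>
    obtain ⟨w₁, w₂, hp⟩ := hbr p List.mem_cons_self
    have hmon : (p.2.eval v) i i = 0 := by
      rw [hp]
      exact (LieWord.eval_isUpperTriangular hv w₁).lie_apply_self
        (LieWord.eval_isUpperTriangular hv w₂) i
    simp only [evalPoly, List.map_cons, List.sum_cons] at ih ⊢
    rw [Matrix.add_apply, Matrix.smul_apply, hmon, smul_zero, zero_add,
      ih fun q hq => hbr q (List.mem_cons_of_mem p hq)]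

end UpperTriangular

section MatrixUnits

variable {R ι : Type*} [CommRing R] [Fintype ι] [DecidableEq ι] {i j : ι}

lemma Matrix.lie_single_single_row (h : i ≠ j) :
    ⁅single i i (1 : R), single i j (1 : R)⁆ = single i j 1 := by
  rw [Ring.lie_def, single_mul_single_same, single_mul_single_of_ne (h := h.symm), one_mul,
    sub_zero]

lemma Matrix.lie_single_single_col (h : i ≠ j) :
    ⁅single i i (1 : R), single j i (1 : R)⁆ = -single j i 1 := by
  rw [Ring.lie_def, single_mul_single_of_ne (h := h), single_mul_single_same, one_mul, zero_sub]

end MatrixUnits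

section ElementaryGrading

variable {F G : Type*} [Field F] {n : ℕ}

def elementaryGrading (deg : Fin n → Fin n → G) (g : G) :
    Submodule F (Matrix (Fin n) (Fin n) F) :=
  Submodule.span F {x | ∃ i j : Fin n, i ≤ j ∧ x = single i j 1 ∧ deg i j = g}

variable {deg : Fin n → Fin n → G}

lemma single_mem_elementaryGrading {i j : Fin n} (hij : i ≤ j) :
    single i j (1 : F) ∈ elementaryGrading deg (deg i j) :=
  Submodule.subset_span ⟨i, j, hij, rfl, rfl⟩

lemma elementaryGrading_le {U : G → Submodule F (Matrix (Fin n) (Fin n) F)}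
    (hdeg : ∀ i j : Fin n, i ≤ j → single i j 1 ∈ U (deg i j)) (g : G) :
    elementaryGrading deg g ≤ U g := by
  refine Submodule.span_le.mpr ?_
  rintro x ⟨i, j, hij, rfl, rfl⟩
  exact hdeg i j hij

lemma mem_iSup_elementaryGrading {x : Matrix (Fin n) (Fin n) F} (hx : x.IsUpperTriangular) :
    x ∈ ⨆ g, elementaryGrading (F := F) deg g := by
  rw [matrix_eq_sum_single x]
  refine Submodule.sum_mem _ fun i _ => Submodule.sum_mem _ fun j _ => ?_
  rcases lt_or_ge j i with h | h
  · rw [hx h, single_zero]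
    exact Submodule.zero_mem _
  · rw [← mul_one (x i j), ← smul_eq_mul, ← smul_single]
    exact Submodule.smul_mem _ _
      (Submodule.mem_iSup_of_mem (deg i j) (single_mem_elementaryGrading h))

lemma apply_self_eq_zero_of_mem_elementaryGrading {g : G} {i : Fin n} (hi : deg i i ≠ g)
    {x : Matrix (Fin n) (Fin n) F} (hx : x ∈ elementaryGrading deg g) : x i i = 0 := by
  induction hx using Submodule.span_induction with
  | mem x hx =>
    obtain ⟨k, l, -, rfl, hkl⟩ := hx
    apply single_apply_of_ne
    rintro ⟨rfl, rfl⟩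
    exact hi hkl
  | zero => rfl
  | add x y _ _ hx hy => rw [Matrix.add_apply, hx, hy, add_zero]
  | smul c x _ hx => rw [Matrix.smul_apply, hx, smul_zero]

end ElementaryGrading

section GradedUT

variable {F G : Type*} [Field F] {n : ℕ}

lemma degree_single_diag_eq_one [Monoid G] [IsRightCancelMul G] (hn : 2 ≤ n)
    {U : G → Submodule F (Matrix (Fin n) (Fin n) F)} (hind : iSupIndep U)
    (hbr : ∀ g h : G, ∀ x ∈ U g, ∀ y ∈ U h, ⁅x, y⁆ ∈ U (g * h))
    {dg : Fin n → Fin n → G} (hdg : ∀ i j : Fin n, i ≤ j → single i j 1 ∈ U (dg i j))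
    (i : Fin n) : dg i i = 1 := by
  have : Nontrivial (Fin n) := Fin.nontrivial_iff_two_le.mpr hn
  obtain ⟨j, hji⟩ := exists_ne i
  have hsingle_ne : ∀ k l : Fin n, single k l (1 : F) ≠ 0 := fun k l h => by
    simpa using congrFun (congrFun h k) l
  rcases hji.lt_or_gt with hlt | hgt
  · refine eq_one_of_smul_mem_mul hind (neg_ne_zero.mpr one_ne_zero) (hsingle_ne j i)
      (hdg j i hlt.le) ?_
    rw [neg_one_smul, ← lie_single_single_col hlt.ne']
    exact hbr _ _ _ (hdg i i le_rfl) _ (hdg j i hlt.le)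
  · refine eq_one_of_smul_mem_mul hind one_ne_zero (hsingle_ne i j) (hdg i j hgt.le) ?_
    rw [one_smul, ← lie_single_single_row hgt.ne]
    exact hbr _ _ _ (hdg i i le_rfl) _ (hdg i j hgt.le)

lemma forall_evalPoly_eq_zero_of_forall_mem_span_one [One G] {m : ℕ}
    {V : G → Submodule F (Matrix (Fin n) (Fin n) F)} {i j : Fin n} (hij : i ≠ j)
    (hUT : ∀ g, ∀ x ∈ V g, x.IsUpperTriangular)
    (hdiag : ∀ g ≠ 1, ∀ x ∈ V g, x i i = 0) (hsingle : single i i 1 ∈ V 1)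
    {P : List (F × LieWord m)}
    (hmulti : ∀ p ∈ P, p.2.vars = (Finset.univ.val : Multiset (Fin m))) {d : Fin m → G}
    (hP : ∀ v : Fin m → Matrix (Fin n) (Fin n) F, (∀ k, v k ∈ V (d k)) →
      evalPoly P v ∈ Submodule.span F {1})
    (v : Fin m → Matrix (Fin n) (Fin n) F) (hv : ∀ k, v k ∈ V (d k)) : evalPoly P v = 0 := by
  obtain ⟨t, ht⟩ := Submodule.mem_span_singleton.mp (hP v hv)
  suffices t = 0 by rw [← ht, this, zero_smul]
  rcases LieWord.multilinear_cases hmulti with hbr | ⟨k, hvar⟩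
  · simpa [evalPoly_apply_self_eq_zero hbr (fun k => hUT _ _ (hv k)) i] using
      congrFun (congrFun ht i) i
  rw [evalPoly_eq_smul_of_forall_eq_var hvar] at ht
  have hti : t = (P.map Prod.fst).sum * v k i i := by simpa using congrFun (congrFun ht i) i
  rw [hti]
  by_cases hd : d k = 1
  · -- substitute `e_{ii}` for the variable to see that the coefficient vanishes
    have hv' : ∀ k', (Pi.single k (single i i 1) : Fin m → Matrix (Fin n) (Fin n) F) k' ∈
        V (d k') := fun k' => by
      rcases eq_or_ne k' k with rfl | hk'
      · rwa [Pi.single_eq_same, hd]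
      · rw [Pi.single_eq_of_ne hk']
        exact Submodule.zero_mem _
    obtain ⟨s, hs⟩ := Submodule.mem_span_singleton.mp (hP _ hv')
    rw [evalPoly_eq_smul_of_forall_eq_var hvar, Pi.single_eq_same] at hs
    have hs₀ : s = 0 := by simpa [single_apply, hij] using congrFun (congrFun hs j) j
    have hc : (P.map Prod.fst).sum = 0 := by simpa [hs₀] using (congrFun (congrFun hs i) i).symm
    rw [hc, zero_mul]
  · rw [hdiag _ hd _ (hv k), mul_zero]

end GradedUT

theorem stmt19_general (F G : Type*) [Field F] [Group G] (n : ℕ) (hn : 2 ≤ n)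
    (U : G → Submodule F (Matrix (Fin n) (Fin n) F))
    (hUT : ∀ g, ∀ x ∈ U g, ∀ i j : Fin n, j < i → x i j = 0)
    (hind : iSupIndep U)
    (hbr : ∀ g h : G, ∀ x ∈ U g, ∀ y ∈ U h, ⁅x, y⁆ ∈ U (g * h))
    (dg : Fin n → Fin n → G)
    (hdg : ∀ i j : Fin n, i ≤ j → Matrix.single i j 1 ∈ U (dg i j))
    (m : ℕ) (P : List (F × LieWord m))
    (hmulti : ∀ p ∈ P, p.2.vars = (Finset.univ.val : Multiset (Fin m)))
    (d : Fin m → G) :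
    let Z : Submodule F (Matrix (Fin n) (Fin n) F) :=
      Submodule.span F {(1 : Matrix (Fin n) (Fin n) F)}
    let U' : G → Submodule F (Matrix (Fin n) (Fin n) F) := fun h =>
      Submodule.span F {x | ∃ i j : Fin n, i ≤ j ∧ x = Matrix.single i j 1 ∧
        (if i = j then 1 else dg i j) = h}
    (∀ v : Fin m → Matrix (Fin n) (Fin n) F,
        (∀ k, v k ∈ U (d k) ⊔ Z) → evalPoly P v ∈ Z)
      ↔ (∀ v : Fin m → Matrix (Fin n) (Fin n) F,
        (∀ k, v k ∈ U' (d k)) → evalPoly P v = 0) := by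
  intro Z U'
  let deg : Fin n → Fin n → G := fun i j => if i = j then 1 else dg i j
  have hdeg : ∀ i j : Fin n, i ≤ j → single i j 1 ∈ U (deg i j) := fun i j hij => by
    by_cases h : i = j
    · subst h
      simpa [deg, degree_single_diag_eq_one hn hind hbr hdg i] using hdg i i le_rfl
    · simpa [deg, h] using hdg i j hij
  have hU' : elementaryGrading deg = U :=
    hind.eq_of_le_of_iSup_le (elementaryGrading_le hdeg)
      (iSup_le fun g x hx => mem_iSup_elementaryGrading fun i j h => hUT g x hx i j h)
  have hZ : ∀ z ∈ Z, ∀ x : Matrix (Fin n) (Fin n) F, ⁅x, z⁆ = 0 := fun z hz x => by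
    obtain ⟨c, rfl⟩ := Submodule.mem_span_singleton.mp hz
    simp [Ring.lie_def]
  change _ ↔ ∀ v, (∀ k, v k ∈ elementaryGrading deg (d k)) → evalPoly P v = 0
  refine ⟨fun hL => ?_, fun hR => ?_⟩
  · obtain ⟨i, j, hij⟩ := (Fin.nontrivial_iff_two_le.mpr hn).exists_pair_ne
    exact forall_evalPoly_eq_zero_of_forall_mem_span_one hij
      (fun g x hx _ _ h => hUT g x (hU' ▸ hx) _ _ h)
      (fun g hg x => apply_self_eq_zero_of_mem_elementaryGrading (by simpa [deg] using hg.symm))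
      (by simpa [deg] using single_mem_elementaryGrading (deg := deg) (le_refl i)) hmulti
      (fun v hv => hL v fun k => Submodule.mem_sup_left (hU' ▸ hv k))
  · rw [hU'] at hR
    exact evalPoly_mem_of_forall_mem_sup hZ U d P hR

/-- let `Γ` (given by `U`) be a `G`-grading on `UT_n^(-)` in which
every matrix unit `e_{ij}` (`i ≤ j`) is homogeneous, of degree `dg i j`. A
multilinear `G`-graded Lie polynomial `P`, with variable degrees `d`, is a graded
identity of the central quotient `UT_n^(-)/F·I` (with the induced grading: values
of a variable of degree `k` range over `U (d k) ⊔ F·I` and the evaluation must be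
central) if and only if it is a graded identity of `(UT_n^(-), Γ')`, where `Γ'` is
the elementary grading with `deg e_{ii}` replaced by `1` and `deg I = 1`. -/
theorem stmt19 (F G : Type*) [Field F] [Group G] (n : ℕ) (hn : 2 ≤ n)
    (U : G → Submodule F (Matrix (Fin n) (Fin n) F))
    (hUT : ∀ g, ∀ x ∈ U g, ∀ i j : Fin n, j < i → x i j = 0)
    (hcover : ∀ x : Matrix (Fin n) (Fin n) F,
      (∀ i j : Fin n, j < i → x i j = 0) → x ∈ ⨆ g, U g)
    (hind : iSupIndep U)
    (hbr : ∀ g h : G, ∀ x ∈ U g, ∀ y ∈ U h, ⁅x, y⁆ ∈ U (g * h))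
    (dg : Fin n → Fin n → G)
    (hdg : ∀ i j : Fin n, i ≤ j → Matrix.single i j 1 ∈ U (dg i j))
    (m : ℕ) (P : List (F × LieWord m))
    (hmulti : ∀ p ∈ P, p.2.vars = (Finset.univ.val : Multiset (Fin m)))
    (d : Fin m → G) :
    let Z : Submodule F (Matrix (Fin n) (Fin n) F) :=
      Submodule.span F {(1 : Matrix (Fin n) (Fin n) F)}
    let U' : G → Submodule F (Matrix (Fin n) (Fin n) F) := fun h =>
      Submodule.span F {x | ∃ i j : Fin n, i ≤ j ∧ x = Matrix.single i j 1 ∧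
        (if i = j then 1 else dg i j) = h}
    (∀ v : Fin m → Matrix (Fin n) (Fin n) F,
        (∀ k, v k ∈ U (d k) ⊔ Z) → evalPoly P v ∈ Z)
      ↔ (∀ v : Fin m → Matrix (Fin n) (Fin n) F,
        (∀ k, v k ∈ U' (d k)) → evalPoly P v = 0) :=
  stmt19_general F G n hn U hUT hind hbr dg hdg m P hmulti d
end
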